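/- Let G be a compact group which is D-quasi-random, with Haar probability measure dg, and let π : G → U(V) be a continuous unitary representation of G on a complex Hilbert space V. Then for all u, v ∈ V one has ∫_G | ⟨u, π^g v⟩_V − ⟨P°_π u, P°_π v⟩_V |² dg ≤ D^{-1/2} · ‖u‖_V² · ‖v‖_V². -/

import Mathlib

open scoped InnerProductSpace

/-- A topological group `G` is `D`-quasi-random if every nontrivial finite-dimensional
continuous unitary representation of `G` has dimension at least `D`. -/
def IsQuasiRandom (G : Type*) [Group G] [TopologicalSpace G] (D : ℕ) : Prop :=
  ∀ (V : Type) [NormedAddCommGroup V] [InnerProductSpace ℂ V] [FiniteDimensional ℂ V]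
    (π : G →* (V ≃ₗᵢ[ℂ] V)),
    (∀ v : V, Continuous fun g : G => π g v) →
    (∃ (g : G) (v : V), π g v ≠ v) →
    D ≤ Module.finrank ℂ V

/-- The subspace of vectors fixed by a unitary representation `π`. -/
def fixedSubmodule {G V : Type*} [Group G] [NormedAddCommGroup V] [InnerProductSpace ℂ V]
    (π : G →* (V ≃ₗᵢ[ℂ] V)) : Submodule ℂ V where
  carrier := {v | ∀ g : G, π g v = v}
  add_mem' := by
    intro a b ha hb g
    rw [map_add, ha g, hb g]
  zero_mem' := by
    intro g
    exact map_zero _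
  smul_mem' := by
    intro c a ha g
    rw [map_smul, ha g]

lemma isClosed_fixedSubmodule {G V : Type*} [Group G] [NormedAddCommGroup V]
    [InnerProductSpace ℂ V] (π : G →* (V ≃ₗᵢ[ℂ] V)) :
    IsClosed ((fixedSubmodule π : Submodule ℂ V) : Set V) := by
  have h : ((fixedSubmodule π : Submodule ℂ V) : Set V) = ⋂ g : G, {v : V | π g v = v} := by
    ext v
    simp only [SetLike.mem_coe, Set.mem_iInter, Set.mem_setOf_eq]
    exact Iff.rfl
  rw [h]
  exact isClosed_iInter fun g => isClosed_eq (π g).continuous continuous_id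

/-- The orthogonal projection `P°_π : V → V` onto the subspace of `π`-fixed vectors,
viewed as a continuous linear map from `V` to itself. -/
noncomputable def fixedProjection {G V : Type*} [Group G] [NormedAddCommGroup V]
    [InnerProductSpace ℂ V] [CompleteSpace V] (π : G →* (V ≃ₗᵢ[ℂ] V)) : V →L[ℂ] V :=
  haveI : CompleteSpace (fixedSubmodule π) := (isClosed_fixedSubmodule π).completeSpace_coe
  (fixedSubmodule π).subtypeL.comp ((fixedSubmodule π).orthogonalProjectionOnto)


open MeasureTheory

/-!
Write `u'`, `v'` for the components of `u`, `v` orthogonal to the `π`-fixed vectors. The integrand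
is `|⟪u', π g v'⟫|²`, so the integral is `⟪u', T u'⟫ ≤ ‖T‖ ‖u'‖²` for the frame operator
`T = ∫ |π g v'⟩⟨π g v'| dg` of the orbit of `v'`, a positive compact operator. Left invariance of
the Haar measure makes `T` commute with `π`, and the range of `T` is orthogonal to the fixed
vectors. Hence the eigenspace of the top eigenvalue `‖T‖` is a finite-dimensional invariant
subspace on which `π` acts nontrivially, of dimension at least `D` by quasi-randomness. Summing
`⟪e, T e⟫ = ‖T‖` over an orthonormal basis `e` of it and applying Bessel's inequality to each
`π g v'` gives `D ‖T‖ ≤ ‖v'‖²`.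
-/

open InnerProductSpace Module End

theorem InnerProductSpace.isCompactOperator_rankOne {𝕜 E F : Type*} [RCLike 𝕜]
    [NormedAddCommGroup E] [NormedSpace 𝕜 E] [NormedAddCommGroup F] [InnerProductSpace 𝕜 F]
    (x : E) (y : F) : IsCompactOperator (rankOne 𝕜 x y) := by
  rw [rankOne_def']
  exact (isCompactOperator_of_locallyCompactSpace_rng
    (ContinuousLinearMap.toSpanSingleton 𝕜 x)).comp_clm _

theorem IsCompactOperator.hasEigenvalue_norm_of_nonneg {V : Type*} [NormedAddCommGroup V]
    [InnerProductSpace ℂ V] [CompleteSpace V] {T : V →L[ℂ] V}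
    (hT : IsCompactOperator T) (hT₀ : 0 ≤ T) (hne : T ≠ 0) :
    HasEigenvalue (T : End ℂ V) (‖T‖ : ℂ) := by
  have := nontrivial_of_ne T 0 hne
  rw [hT.hasEigenvalue_iff_mem_spectrum (by simpa using hne), ← Complex.coe_algebraMap,
    ← Set.mem_preimage, spectrum.preimage_algebraMap]
  exact CStarAlgebra.norm_mem_spectrum_of_nonneg hT₀

section FrameOperator

variable {X V : Type*} [MeasurableSpace X] [NormedAddCommGroup V] [InnerProductSpace ℂ V]

noncomputable def frameOperator (μ : Measure X) (c : X → V) : V →L[ℂ] V :=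
  ∫ x, rankOne ℂ (c x) (c x) ∂μ

theorem frameOperator_nonneg [CompleteSpace V] (μ : Measure X) (c : X → V) :
    0 ≤ frameOperator μ c :=
  integral_nonneg fun _ =>
    (ContinuousLinearMap.nonneg_iff_isPositive _).mpr (isPositive_rankOne_self _)

variable [TopologicalSpace X] [CompactSpace X] [OpensMeasurableSpace X]
  {μ : Measure X} [IsFiniteMeasure μ] {c : X → V}

theorem Continuous.integrable_of_compactSpace {E : Type*} [NormedAddCommGroup E] {f : X → E}
    (hf : Continuous f) : Integrable f μ :=
  hf.integrable_of_hasCompactSupport (.of_compactSpace f)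

theorem integrable_rankOne_self (hc : Continuous c) :
    Integrable (fun x => rankOne ℂ (c x) (c x)) μ :=
  Continuous.integrable_of_compactSpace (by simp only [rankOne_def]; fun_prop)

theorem frameOperator_apply (hc : Continuous c) (w : V) :
    frameOperator μ c w = ∫ x, ⟪c x, w⟫_ℂ • c x ∂μ :=
  ContinuousLinearMap.integral_apply (integrable_rankOne_self hc) w

variable [CompleteSpace V]

theorem inner_frameOperator_apply (hc : Continuous c) (y w : V) :
    ⟪y, frameOperator μ c w⟫_ℂ = ∫ x, ⟪y, c x⟫_ℂ * ⟪c x, w⟫_ℂ ∂μ := by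
  rw [frameOperator_apply hc,
    ← integral_inner (Continuous.integrable_of_compactSpace (by fun_prop))]
  simp_rw [inner_smul_right, mul_comm]

theorem re_inner_frameOperator_self (hc : Continuous c) (y : V) :
    RCLike.re ⟪y, frameOperator μ c y⟫_ℂ = ∫ x, ‖⟪y, c x⟫_ℂ‖ ^ 2 ∂μ := by
  rw [inner_frameOperator_apply hc,
    ← integral_re (Continuous.integrable_of_compactSpace (by fun_prop))]
  simp_rw [inner_mul_symm_re_eq_norm, norm_mul, norm_inner_symm, sq]

theorem isCompactOperator_frameOperator [IsProbabilityMeasure μ] (hc : Continuous c) :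
    IsCompactOperator (frameOperator μ c) := by
  refine Convex.integral_mem (s := {T : V →L[ℂ] V | IsCompactOperator T}) ?_
    isClosed_setOfPred_isCompactOperator (.of_forall fun x => isCompactOperator_rankOne _ _)
    (integrable_rankOne_self hc)
  intro S hS T hT a b _ _ _
  exact (hS.smul a).add (hT.smul b)

theorem inner_frameOperator_eq_zero (hc : Continuous c) {y : V} (hy : ∀ x, ⟪y, c x⟫_ℂ = 0)
    (w : V) : ⟪y, frameOperator μ c w⟫_ℂ = 0 := by
  simp [inner_frameOperator_apply hc, hy]

theorem finrank_eigenspace_frameOperator_mul_le (hc : Continuous c) (r : ℝ)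
    [FiniteDimensional ℂ (eigenspace (frameOperator μ c : End ℂ V) r)] :
    finrank ℂ (eigenspace (frameOperator μ c : End ℂ V) r) * r ≤ ∫ x, ‖c x‖ ^ 2 ∂μ := by
  set E := eigenspace (frameOperator μ c : End ℂ V) r
  let b := stdOrthonormalBasis ℂ E
  have hb : Orthonormal ℂ fun i => (b i : V) := b.orthonormal.comp_linearIsometry E.subtypeₗᵢ
  have hrayleigh : ∀ i, RCLike.re ⟪(b i : V), frameOperator μ c (b i)⟫_ℂ = r := by
    intro i
    have hbi : frameOperator μ c (b i) = (r : ℂ) • (b i : V) := mem_eigenspace_iff.mp (b i).2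
    rw [hbi, inner_smul_right, inner_self_eq_norm_sq_to_K, hb.1 i]
    simp
  calc finrank ℂ E * r = ∑ i, RCLike.re ⟪(b i : V), frameOperator μ c (b i)⟫_ℂ := by
        simp [hrayleigh]
    _ = ∫ x, ∑ i, ‖⟪(b i : V), c x⟫_ℂ‖ ^ 2 ∂μ := by
        rw [integral_finsetSum _ fun i _ => Continuous.integrable_of_compactSpace (by fun_prop)]
        simp_rw [re_inner_frameOperator_self hc]
    _ ≤ ∫ x, ‖c x‖ ^ 2 ∂μ :=
        integral_mono (Continuous.integrable_of_compactSpace (by fun_prop))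
          (Continuous.integrable_of_compactSpace (by fun_prop))
          fun x => hb.sum_inner_products_le _

end FrameOperator

section Representation

variable {G V : Type*} [Group G] [NormedAddCommGroup V] [InnerProductSpace ℂ V]

noncomputable def restrictInvariant (π : G →* (V ≃ₗᵢ[ℂ] V)) (W : Submodule ℂ V)
    (hW : ∀ g, ∀ w ∈ W, π g w ∈ W) : G →* (W ≃ₗᵢ[ℂ] W) where
  toFun g :=
    { toLinearEquiv := (π g).toLinearEquiv.ofSubmodules W W <|
        le_antisymm (Submodule.map_le_iff_le_comap.mpr (hW g))
          fun w hw => ⟨π g⁻¹ w, hW _ _ hw, by simp⟩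
      norm_map' w := (π g).norm_map w }
  map_one' := by ext; simp
  map_mul' g h := by ext w; exact DFunLike.congr_fun (map_mul π g h) (w : V)

/- `IsQuasiRandom` only quantifies over representation spaces in `Type`, so `ρ` is transported
to a Euclidean space along an orthonormal basis. -/
theorem IsQuasiRandom.le_finrank [TopologicalSpace G] {D : ℕ} (hQR : IsQuasiRandom G D)
    {W : Type*} [NormedAddCommGroup W] [InnerProductSpace ℂ W] [FiniteDimensional ℂ W]
    (ρ : G →* (W ≃ₗᵢ[ℂ] W)) (hρ : ∀ w, Continuous fun g => ρ g w)
    (hnt : ∃ g w, ρ g w ≠ w) : D ≤ finrank ℂ W := by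
  let e := (stdOrthonormalBasis ℂ W).repr
  let ρ' : G →* (EuclideanSpace ℂ (Fin (finrank ℂ W)) ≃ₗᵢ[ℂ]
      EuclideanSpace ℂ (Fin (finrank ℂ W))) :=
    { toFun g := (e.symm.trans (ρ g)).trans e
      map_one' := by ext; simp
      map_mul' g h := by ext; simp }
  obtain ⟨g, w, hw⟩ := hnt
  simpa using hQR _ ρ' (fun x => e.continuous.comp (hρ _)) ⟨g, e w, by simpa [ρ'] using hw⟩

theorem IsQuasiRandom.le_finrank_of_invariant [TopologicalSpace G] {D : ℕ}
    (hQR : IsQuasiRandom G D) (π : G →* (V ≃ₗᵢ[ℂ] V)) (hπ : ∀ v : V, Continuous fun g => π g v)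
    (W : Submodule ℂ V) [FiniteDimensional ℂ W] (hW : ∀ g, ∀ w ∈ W, π g w ∈ W)
    (hnt : ∃ g, ∃ w ∈ W, π g w ≠ w) : D ≤ finrank ℂ W := by
  refine hQR.le_finrank (restrictInvariant π W hW) (fun w => (hπ w).subtype_mk _) ?_
  obtain ⟨g, w, hw, hne⟩ := hnt
  exact ⟨g, ⟨w, hw⟩, fun h => hne (congrArg Subtype.val h)⟩

theorem apply_mem_orthogonal_fixedSubmodule (π : G →* (V ≃ₗᵢ[ℂ] V)) {w : V}
    (hw : w ∈ (fixedSubmodule π)ᗮ) (g : G) : π g w ∈ (fixedSubmodule π)ᗮ := by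
  intro f hf
  rw [← hf g, LinearIsometryEquiv.inner_map_map]
  exact hw f hf

variable [CompleteSpace V]

instance (π : G →* (V ≃ₗᵢ[ℂ] V)) : CompleteSpace (fixedSubmodule π) :=
  (isClosed_fixedSubmodule π).completeSpace_coe

theorem fixedProjection_eq_starProjection (π : G →* (V ≃ₗᵢ[ℂ] V)) :
    fixedProjection π = (fixedSubmodule π).starProjection :=
  rfl

theorem inner_apply_sub_inner_fixedProjection (π : G →* (V ≃ₗᵢ[ℂ] V)) (u v : V) (g : G) :
    ⟪u, π g v⟫_ℂ - ⟪fixedProjection π u, fixedProjection π v⟫_ℂ =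
      ⟪(fixedSubmodule π)ᗮ.starProjection u, π g ((fixedSubmodule π)ᗮ.starProjection v)⟫_ℂ := by
  set K := fixedSubmodule π
  rw [fixedProjection_eq_starProjection]
  conv_lhs => enter [1]; rw [← K.starProjection_add_starProjection_orthogonal u,
    ← K.starProjection_add_starProjection_orthogonal v]
  have hQv := apply_mem_orthogonal_fixedSubmodule π (Kᗮ.starProjection_apply_mem v) g
  rw [map_add, K.starProjection_apply_mem v g, inner_add_left, inner_add_right, inner_add_right,
    K.inner_right_of_mem_orthogonal (K.starProjection_apply_mem u) hQv,
    K.inner_left_of_mem_orthogonal (K.starProjection_apply_mem v) (Kᗮ.starProjection_apply_mem u)]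
  ring

end Representation

section Orbit

variable {G V : Type*} [Group G] [TopologicalSpace G] [CompactSpace G]
  [MeasurableSpace G] [BorelSpace G] {μ : Measure G} [IsProbabilityMeasure μ]
  [NormedAddCommGroup V] [InnerProductSpace ℂ V] [CompleteSpace V] {π : G →* (V ≃ₗᵢ[ℂ] V)}

theorem inner_frameOperator_orbit_eq_zero (hπ : ∀ v : V, Continuous fun g => π g v) {v f : V}
    (hv : v ∈ (fixedSubmodule π)ᗮ) (hf : f ∈ fixedSubmodule π) (w : V) :
    ⟪f, frameOperator μ (fun g => π g v) w⟫_ℂ = 0 :=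
  inner_frameOperator_eq_zero (hπ v)
    (fun g => (fixedSubmodule π).inner_right_of_mem_orthogonal hf
      (apply_mem_orthogonal_fixedSubmodule π hv g)) w

variable [IsTopologicalGroup G] [μ.IsMulLeftInvariant]

theorem apply_frameOperator_orbit (hπ : ∀ v : V, Continuous fun g => π g v) (v : V) (h : G)
    (w : V) :
    π h (frameOperator μ (fun g => π g v) w) = frameOperator μ (fun g => π g v) (π h w) :=
  calc π h (frameOperator μ (fun g => π g v) w)
      = π h (∫ g, ⟪π g v, w⟫_ℂ • π g v ∂μ) := by rw [frameOperator_apply (hπ v)]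
    _ = ∫ g, π h (⟪π g v, w⟫_ℂ • π g v) ∂μ :=
        ((π h).toLinearIsometry.integral_comp_comm _).symm
    _ = ∫ g, ⟪π (h * g) v, π h w⟫_ℂ • π (h * g) v ∂μ := by
        simp [LinearIsometryEquiv.inner_map_map]
    _ = ∫ g, ⟪π g v, π h w⟫_ℂ • π g v ∂μ :=
        integral_mul_left_eq_self (fun g => ⟪π g v, π h w⟫_ℂ • π g v) h
    _ = frameOperator μ (fun g => π g v) (π h w) := (frameOperator_apply (hπ v) _).symm

theorem IsQuasiRandom.mul_norm_frameOperator_orbit_le {D : ℕ}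
    (hQR : IsQuasiRandom G D) (hπ : ∀ v : V, Continuous fun g => π g v) {v : V}
    (hv : v ∈ (fixedSubmodule π)ᗮ) :
    D * ‖frameOperator μ (fun g => π g v)‖ ≤ ‖v‖ ^ 2 := by
  set T := frameOperator μ (fun g => π g v)
  obtain hT | hT := eq_or_ne T 0
  · simp [hT]
  have hTc : IsCompactOperator T := isCompactOperator_frameOperator (μ := μ) (hπ v)
  have hnorm : (‖T‖ : ℂ) ≠ 0 := by simpa using hT
  set E := eigenspace (T : End ℂ V) ‖T‖
  have : FiniteDimensional ℂ E := T.finite_dimensional_eigenspace hTc _ hnorm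
  have hE : ∀ g, ∀ w ∈ E, π g w ∈ E := by
    intro g w hw
    rw [mem_eigenspace_iff] at hw ⊢
    change T (π g w) = _
    rw [← apply_frameOperator_orbit hπ, show T w = _ from hw, map_smul]
  have hnt : ∃ g, ∃ w ∈ E, π g w ≠ w := by
    obtain ⟨e, heE, he⟩ :=
      (hTc.hasEigenvalue_norm_of_nonneg (frameOperator_nonneg μ _) hT).exists_hasEigenvector
    by_contra! hfix
    have h0 := inner_frameOperator_orbit_eq_zero (μ := μ) hπ hv (fun g => hfix g e heE) e
    rw [show T e = _ from mem_eigenspace_iff.mp heE, inner_smul_right] at h0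
    exact he (inner_self_eq_zero.mp ((mul_eq_zero.mp h0).resolve_left hnorm))
  calc (D : ℝ) * ‖T‖ ≤ finrank ℂ E * ‖T‖ := by
        gcongr; exact_mod_cast hQR.le_finrank_of_invariant π hπ E hE hnt
    _ ≤ ∫ g, ‖π g v‖ ^ 2 ∂μ := finrank_eigenspace_frameOperator_mul_le (hπ v) ‖T‖
    _ = ‖v‖ ^ 2 := by simp

end Orbit

/-- If `G` is a `D`-quasi-random compact group with Haar probability measure and
`π : G ↷ V` is a continuous unitary representation on a complex Hilbert space `V`, then for
all `u, v ∈ V`, `∫_G |⟨u, π^g v⟩ − ⟨P°_π u, P°_π v⟩|² dg ≤ D^{-1/2}·‖u‖²·‖v‖²`. -/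
theorem integral_inner_sq_fixed_projection_bound
    {G V : Type*} [Group G] [TopologicalSpace G] [IsTopologicalGroup G] [CompactSpace G]
    [MeasurableSpace G] [BorelSpace G]
    (μ : Measure G) [μ.IsHaarMeasure] [IsProbabilityMeasure μ]
    [NormedAddCommGroup V] [InnerProductSpace ℂ V] [CompleteSpace V]
    (D : ℕ) (hD : 0 < D) (hQR : IsQuasiRandom G D)
    (π : G →* (V ≃ₗᵢ[ℂ] V)) (hπ : ∀ v : V, Continuous fun g : G => π g v)
    (u v : V) :
    ∫ g, ‖⟪u, π g v⟫_ℂ - ⟪fixedProjection π u, fixedProjection π v⟫_ℂ‖ ^ 2 ∂μ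
      ≤ (D : ℝ) ^ (-(1 / 2 : ℝ)) * ‖u‖ ^ 2 * ‖v‖ ^ 2 := by
  set Q := (fixedSubmodule π)ᗮ.starProjection
  set T := frameOperator μ fun g => π g (Q v)
  have hT : D * ‖T‖ ≤ ‖Q v‖ ^ 2 :=
    hQR.mul_norm_frameOperator_orbit_le hπ ((fixedSubmodule π)ᗮ.starProjection_apply_mem v)
  have hD₁ : (1 : ℝ) ≤ D := by exact_mod_cast hD
  have hDinv : (D : ℝ)⁻¹ ≤ (D : ℝ) ^ (-(1 / 2 : ℝ)) := by
    simpa [Real.rpow_neg_one] using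
      Real.rpow_le_rpow_of_exponent_le hD₁ (by norm_num : (-1 : ℝ) ≤ -(1 / 2))
  calc ∫ g, ‖⟪u, π g v⟫_ℂ - ⟪fixedProjection π u, fixedProjection π v⟫_ℂ‖ ^ 2 ∂μ
      = RCLike.re ⟪Q u, T (Q u)⟫_ℂ := by
        simp_rw [inner_apply_sub_inner_fixedProjection]
        exact (re_inner_frameOperator_self (hπ _) _).symm
    _ ≤ ‖T‖ * ‖Q u‖ ^ 2 := by
        grw [re_inner_le_norm, T.le_opNorm]
        exact le_of_eq (by ring)
    _ ≤ (D : ℝ)⁻¹ * ‖Q v‖ ^ 2 * ‖Q u‖ ^ 2 := by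
        gcongr
        rwa [le_inv_mul_iff₀ (by positivity)]
    _ ≤ (D : ℝ) ^ (-(1 / 2 : ℝ)) * ‖u‖ ^ 2 * ‖v‖ ^ 2 := by
        rw [mul_right_comm]
        gcongr <;> exact Submodule.norm_starProjection_apply_le _ _
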